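/- arXiv:2005.07840 — 4 statements merged into one kernel-verified Lean document; each statement's English description precedes it below -/
import Mathlib

section
/- Let f: ℝ → ℝ be differentiable. Then the infinitesimal similitude (Df)(x₀) = lim_{xₙ,yₙ→x₀, xₙ≠yₙ} |f(xₙ)-f(yₙ)|/|xₙ-yₙ| exists (independently of the sequences) if and only if |f'| is continuous at x₀. Moreover, when (Df)(x₀) exists, (Df)(x₀) = |f'(x₀)|. -/
open Filter Topology

/-- `f` is an infinitesimal similitude at `x` with value `D`. -/
def IsInfSimAt {X Y : Type*} [MetricSpace X] [MetricSpace Y] (f : X → Y) (x : X) (D : ℝ) : Prop :=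
  ∀ u v : ℕ → X, (∀ m, u m ≠ v m) →
    Tendsto u atTop (𝓝 x) → Tendsto v atTop (𝓝 x) →
    Tendsto (fun m => dist (f (u m)) (f (v m)) / dist (u m) (v m)) atTop (𝓝 D)

/-!
Both directions run through the difference quotient `|f a - f b| / |a - b| = |slope f a b|`.
If `|f'|` is continuous at `x₀`, the mean value theorem writes each quotient as `|f' c|` with
`c` between `a` and `b`, so the quotients tend to `|f' x₀|`. Conversely, if the quotients tend
to `D` off the diagonal, then every `|f' x|` with `x` near `x₀` is a limit of such quotients
(let `b → a = x`), so `|f'|` tends to `D` at `x₀`; evaluating at `x₀` gives `D = |f' x₀|`.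
-/

open Set

theorem isInfSimAt_iff_tendsto {X Y : Type*} [MetricSpace X] [MetricSpace Y] {f : X → Y}
    {x : X} {D : ℝ} :
    IsInfSimAt f x D ↔ Tendsto (fun p : X × X => dist (f p.1) (f p.2) / dist p.1 p.2)
      (𝓝[(diagonal X)ᶜ] (x, x)) (𝓝 D) := by
  constructor
  · intro h
    rw [tendsto_iff_seq_tendsto]
    intro w hw
    -- `w` is only eventually off the diagonal, so apply `h` to a shift of it
    obtain ⟨N, hN⟩ := eventually_atTop.1 (tendsto_nhdsWithin_iff.1 hw).2
    have hwN : Tendsto (fun m => w (m + N)) atTop (𝓝 (x, x)) :=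
      (tendsto_nhdsWithin_iff.1 hw).1.comp (tendsto_add_atTop_nat N)
    rw [← tendsto_add_atTop_iff_nat N]
    exact h (fun m => (w (m + N)).1) (fun m => (w (m + N)).2) (fun m => hN _ (by omega))
      ((continuous_fst.tendsto _).comp hwN) ((continuous_snd.tendsto _).comp hwN)
  · intro h u v huv hu hv
    exact h.comp (tendsto_nhdsWithin_iff.2 ⟨hu.prodMk_nhds hv, .of_forall huv⟩)

theorem tendsto_of_tendsto_nhdsWithin_diagonal_compl {X Y : Type*} [TopologicalSpace X]
    [TopologicalSpace Y] [RegularSpace Y] [∀ x : X, (𝓝[≠] x).NeBot] {g : X × X → Y}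
    {h : X → Y} {x₀ : X} {y : Y} (hg : Tendsto g (𝓝[(diagonal X)ᶜ] (x₀, x₀)) (𝓝 y))
    (hh : ∀ x, Tendsto (fun x' => g (x, x')) (𝓝[≠] x) (𝓝 (h x))) :
    Tendsto h (𝓝 x₀) (𝓝 y) := by
  refine (closed_nhds_basis y).tendsto_right_iff.2 fun C ⟨hCy, hC⟩ => ?_
  obtain ⟨U, hU, hUC⟩ : ∃ U ∈ 𝓝 x₀, ∀ a ∈ U, ∀ b ∈ U, a ≠ b → g (a, b) ∈ C := by
    obtain ⟨t, ht, htC⟩ := mem_nhdsWithin_iff_exists_mem_nhds_inter.1 (hg hCy)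
    obtain ⟨U, hU, hUt⟩ := mem_prod_self_iff.1 (nhds_prod_eq (x := x₀) (y := x₀) ▸ ht)
    exact ⟨U, hU, fun a ha b hb hab => htC ⟨hUt ⟨ha, hb⟩, hab⟩⟩
  filter_upwards [eventually_eventually_nhds.2 hU] with x hx
  exact hC.mem_of_tendsto (hh x) <| by
    filter_upwards [nhdsWithin_le_nhds hx, self_mem_nhdsWithin] with x' hx' hne
    exact hUC x hx.self_of_nhds x' hx' (Ne.symm hne)

theorem dist_div_dist_eq_norm_slope {𝕜 E : Type*} [NormedField 𝕜] [NormedAddCommGroup E]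
    [NormedSpace 𝕜 E] (f : 𝕜 → E) (a b : 𝕜) :
    dist (f a) (f b) / dist a b = ‖slope f a b‖ := by
  rw [slope, norm_smul, norm_inv, dist_comm, dist_eq_norm,
    dist_comm, dist_eq_norm, div_eq_inv_mul, vsub_eq_sub]

theorem HasDerivAt.tendsto_dist_div_dist {𝕜 E : Type*} [NontriviallyNormedField 𝕜]
    [NormedAddCommGroup E] [NormedSpace 𝕜 E] {f : 𝕜 → E} {f' : E} {x : 𝕜}
    (hf : HasDerivAt f f' x) :
    Tendsto (fun y => dist (f x) (f y) / dist x y) (𝓝[≠] x) (𝓝 ‖f'‖) := by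
  simpa only [dist_div_dist_eq_norm_slope] using (hasDerivAt_iff_tendsto_slope.1 hf).norm

theorem IsInfSimAt.tendsto_norm_deriv {𝕜 E : Type*} [NontriviallyNormedField 𝕜]
    [NormedAddCommGroup E] [NormedSpace 𝕜 E] {f : 𝕜 → E} {x₀ : 𝕜} {D : ℝ}
    (hf : Differentiable 𝕜 f) (hD : IsInfSimAt f x₀ D) :
    Tendsto (fun x => ‖deriv f x‖) (𝓝 x₀) (𝓝 D) :=
  tendsto_of_tendsto_nhdsWithin_diagonal_compl (isInfSimAt_iff_tendsto.1 hD)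
    fun x => (hf x).hasDerivAt.tendsto_dist_div_dist

theorem exists_mem_uIcc_deriv_eq_slope {f : ℝ → ℝ} (hf : Differentiable ℝ f) {a b : ℝ}
    (hab : a ≠ b) : ∃ c ∈ uIcc a b, deriv f c = slope f a b := by
  wlog h : a < b generalizing a b
  · obtain ⟨c, hc, hcf⟩ := this hab.symm (hab.lt_or_gt.resolve_left h)
    exact ⟨c, uIcc_comm a b ▸ hc, hcf.trans (slope_comm f b a)⟩
  obtain ⟨c, hc, hcf⟩ := exists_deriv_eq_slope' f h hf.continuous.continuousOn
    hf.differentiableOn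
  exact ⟨c, Ioo_subset_Icc_self.trans Icc_subset_uIcc hc, hcf⟩

theorem isInfSimAt_abs_deriv_of_continuousAt {f : ℝ → ℝ} {x₀ : ℝ} (hf : Differentiable ℝ f)
    (hcont : ContinuousAt (fun x => |deriv f x|) x₀) : IsInfSimAt f x₀ |deriv f x₀| := by
  choose! c hc hcf using fun p : ℝ × ℝ => exists_mem_uIcc_deriv_eq_slope hf (a := p.1) (b := p.2)
  have hc₀ : Tendsto c (𝓝[(diagonal ℝ)ᶜ] (x₀, x₀)) (𝓝 x₀) := by
    have h₁ : Tendsto Prod.fst (𝓝[(diagonal ℝ)ᶜ] (x₀, x₀)) (𝓝 x₀) :=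
      tendsto_nhdsWithin_of_tendsto_nhds (continuous_fst.tendsto _)
    have h₂ : Tendsto Prod.snd (𝓝[(diagonal ℝ)ᶜ] (x₀, x₀)) (𝓝 x₀) :=
      tendsto_nhdsWithin_of_tendsto_nhds (continuous_snd.tendsto _)
    exact tendsto_of_tendsto_of_tendsto_of_le_of_le' (by simpa using h₁.min h₂)
      (by simpa using h₁.max h₂)
      (eventually_nhdsWithin_of_forall fun p hp => (hc p hp).1)
      (eventually_nhdsWithin_of_forall fun p hp => (hc p hp).2)
  refine isInfSimAt_iff_tendsto.2 ((hcont.tendsto.comp hc₀).congr' ?_)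
  filter_upwards [self_mem_nhdsWithin] with p hp
  simp only [Function.comp_apply, hcf p hp, dist_div_dist_eq_norm_slope, Real.norm_eq_abs]

/-- For a differentiable `f : ℝ → ℝ`, the infinitesimal similitude `(Df)(x₀)` exists iff
`|f'|` is continuous at `x₀`; moreover, whenever it exists, its value is `|f' x₀|`. -/
theorem infSim_exists_iff_abs_deriv_continuousAt (f : ℝ → ℝ) (hf : Differentiable ℝ f)
    (x₀ : ℝ) :
    ((∃ D : ℝ, IsInfSimAt f x₀ D) ↔ ContinuousAt (fun x => |deriv f x|) x₀) ∧
    (∀ D : ℝ, IsInfSimAt f x₀ D → D = |deriv f x₀|) := by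
  have tendsto_abs_deriv {D : ℝ} (hD : IsInfSimAt f x₀ D) :
      Tendsto (fun x => |deriv f x|) (𝓝 x₀) (𝓝 D) := by
    simpa only [Real.norm_eq_abs] using hD.tendsto_norm_deriv hf
  exact ⟨⟨fun ⟨_, hD⟩ => continuousAt_of_tendsto_nhds (tendsto_abs_deriv hD),
      fun hcont => ⟨_, isInfSimAt_abs_deriv_of_continuousAt hf hcont⟩⟩,
    fun _ hD => (eq_of_tendsto_nhds (tendsto_abs_deriv hD)).symm⟩
end

section
/- (Bounded distortion) Let (X, d) be a compact metric space of diameter diam(X), and let f₁, …, f_N: X → X be contractions with contraction ratios c₁, …, c_N < 1 such that each x ↦ (Df_i)(x) is strictly positive and Hölder continuous with exponent s > 0 and Hölder constant K, with m₊ := min_i inf_x (Df_i)(x) > 0 and (Df_i)(x) < 1 for all x. Then for every finite word w = w₁…wₙ over {1,…,N} and all x, y ∈ X, (Df_w)(x) ≤ (Df_w)(y) · exp(K·diam(X)^s / (m₊(1 − c_max^s))), where f_w = f_{w₁}∘⋯∘f_{wₙ}, c_max = max_i c_i. In particular there is a constant C₁ > 1, independent of w, such that T_w ≤ C₁ R_w,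 where T_w = sup_x (Df_w)(x) and R_w = inf_x (Df_w)(x). -/
open Filter Topology

/-- For a word `w = w₁…wₙ`, `fw f w = f_{w₁} ∘ ⋯ ∘ f_{wₙ}`. -/
def fw {X : Type*} {N : ℕ} (f : Fin N → X → X) : List (Fin N) → X → X
  | [], x => x
  | i :: w, x => f i (fw f w x)

/-- The infinitesimal similitude of `f_w`, given via the chain rule:
`(Df_w)(x) = ∏ₖ (Df_{wₖ})(f_{w_{k+1}} ∘ ⋯ ∘ f_{wₙ}(x))`. -/
def Dfw {X : Type*} {N : ℕ} (f : Fin N → X → X) (Df : Fin N → X → ℝ) :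
    List (Fin N) → X → ℝ
  | [], _ => 1
  | i :: w, x => Df i (fw f w x) * Dfw f Df w x

/-!
Write `q = c_max ^ s`. The points `f_v x` and `f_v y` reached after a suffix `v` of the word
are at distance at most `c_max ^ |v| · diam X`, so by Hölder continuity the factors `Df_i` of
the chain rule at these points differ by at most `K · diam(X)^s · q ^ |v|`. Since `Df_i ≥ m₊`,
each factor at `x` is at most `exp (K · diam(X)^s · q ^ |v| / m₊)` times the factor at `y`,
and the geometric series `∑ q ^ k ≤ (1 - q)⁻¹` bounds the total distortion.
-/

open Finset

theorem le_mul_exp_div_of_abs_sub_le {a b δ m : ℝ} (hm : 0 < m) (hmb : m ≤ b)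
    (hab : |a - b| ≤ δ) : a ≤ b * Real.exp (δ / m) := by
  have hδ : 0 ≤ δ / m := div_nonneg ((abs_nonneg _).trans hab) hm.le
  calc a ≤ b + m * (δ / m) := by rw [mul_div_cancel₀ _ hm.ne']; linarith [(abs_le.mp hab).2]
    _ ≤ b * (δ / m + 1) := by nlinarith
    _ ≤ b * Real.exp (δ / m) := by gcongr; exacts [hm.le.trans hmb, Real.add_one_le_exp _]

theorem Real.iSup_le_mul_iInf_of_le_mul {ι : Sort*} {g : ι → ℝ} {C : ℝ} (hC : 0 < C)
    (hg : ∀ i, 0 ≤ g i) (hgC : ∀ i j, g i ≤ g j * C) : ⨆ i, g i ≤ C * ⨅ i, g i := by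
  refine Real.iSup_le (fun i => ?_) (mul_nonneg hC.le (Real.iInf_nonneg hg))
  have : Nonempty ι := ⟨i⟩
  have hinf : g i / C ≤ ⨅ j, g j := le_ciInf fun j => (div_le_iff₀ hC).2 (hgC i j)
  rwa [div_le_iff₀ hC, mul_comm] at hinf

theorem Real.geom_sum_le_inv_one_sub {q : ℝ} (hq0 : 0 ≤ q) (hq1 : q < 1) (n : ℕ) :
    ∑ k ∈ range n, q ^ k ≤ (1 - q)⁻¹ := by
  simpa only [← range_eq_Ico, pow_zero, one_div] using
    geom_sum_Ico_le_of_lt_one (m := 0) (n := n) hq0 hq1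

section Words

variable {X : Type*} {N : ℕ} (f : Fin N → X → X) (Df : Fin N → X → ℝ)

theorem dist_fw_le_pow_mul [MetricSpace X] {c : Fin N → ℝ} {cmax : ℝ}
    (hcontr : ∀ i x y, dist (f i x) (f i y) ≤ c i * dist x y)
    (hccmax : ∀ i, c i ≤ cmax) (hcmax0 : 0 ≤ cmax) (w : List (Fin N)) (x y : X) :
    dist (fw f w x) (fw f w y) ≤ cmax ^ w.length * dist x y := by
  induction w with
  | nil => simp [fw]
  | cons i w ih =>
    calc dist (fw f (i :: w) x) (fw f (i :: w) y)
        ≤ c i * dist (fw f w x) (fw f w y) := hcontr i _ _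
      _ ≤ cmax * (cmax ^ w.length * dist x y) := by gcongr; exact hccmax i
      _ = cmax ^ (i :: w).length * dist x y := by rw [List.length_cons, pow_succ]; ring

theorem abs_sub_Df_fw_le [MetricSpace X] {c : Fin N → ℝ} {cmax s K : ℝ}
    (hcontr : ∀ i x y, dist (f i x) (f i y) ≤ c i * dist x y)
    (hccmax : ∀ i, c i ≤ cmax) (hcmax0 : 0 ≤ cmax) (hs : 0 ≤ s) (hK : 0 ≤ K)
    (hHolder : ∀ i x y, |Df i x - Df i y| ≤ K * dist x y ^ s)
    (i : Fin N) (w : List (Fin N)) (x y : X) :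
    |Df i (fw f w x) - Df i (fw f w y)| ≤ K * dist x y ^ s * (cmax ^ s) ^ w.length :=
  calc |Df i (fw f w x) - Df i (fw f w y)| ≤ K * dist (fw f w x) (fw f w y) ^ s := hHolder i _ _
    _ ≤ K * (cmax ^ w.length * dist x y) ^ s := by
        gcongr; exact dist_fw_le_pow_mul f hcontr hccmax hcmax0 w x y
    _ = K * dist x y ^ s * (cmax ^ s) ^ w.length := by
        rw [Real.mul_rpow (by positivity) dist_nonneg, ← Real.rpow_pow_comm hcmax0]; ring

theorem Dfw_pos (hpos : ∀ i x, 0 < Df i x) (w : List (Fin N)) (x : X) :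
    0 < Dfw f Df w x := by
  induction w with
  | nil => exact one_pos
  | cons i w ih => exact mul_pos (hpos i _) ih

theorem Dfw_le_mul_exp_geom_sum {m δ q : ℝ} (hm : 0 < m) (hmle : ∀ i x, m ≤ Df i x)
    (hvar : ∀ i w x y, |Df i (fw f w x) - Df i (fw f w y)| ≤ δ * q ^ w.length)
    (w : List (Fin N)) (x y : X) :
    Dfw f Df w x ≤ Dfw f Df w y * Real.exp (δ / m * ∑ k ∈ range w.length, q ^ k) := by
  have hpos : ∀ i x, 0 < Df i x := fun i x => hm.trans_le (hmle i x)
  induction w with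
  | nil => simp [Dfw]
  | cons i w ih =>
    have hstep : Df i (fw f w x) ≤ Df i (fw f w y) * Real.exp (δ * q ^ w.length / m) :=
      le_mul_exp_div_of_abs_sub_le hm (hmle i _) (hvar i w x y)
    calc Dfw f Df (i :: w) x = Df i (fw f w x) * Dfw f Df w x := rfl
      _ ≤ (Df i (fw f w y) * Real.exp (δ * q ^ w.length / m)) *
            (Dfw f Df w y * Real.exp (δ / m * ∑ k ∈ range w.length, q ^ k)) :=
          mul_le_mul hstep ih (Dfw_pos f Df hpos w x).le
            (mul_nonneg (hpos i _).le (Real.exp_pos _).le)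
      _ = Dfw f Df (i :: w) y *
            Real.exp (δ / m * ∑ k ∈ range (i :: w).length, q ^ k) := by
          rw [List.length_cons, sum_range_succ, mul_add, Real.exp_add, mul_div_right_comm]
          simp only [Dfw]
          ring

end Words

theorem bounded_distortion_general {X : Type*} [MetricSpace X] [CompactSpace X]
    {N : ℕ} (f : Fin N → X → X) (Df : Fin N → X → ℝ) (c : Fin N → ℝ)
    (cmax s K m : ℝ)
    (hcontr : ∀ i x y, dist (f i x) (f i y) ≤ c i * dist x y)
    (hccmax : ∀ i, c i ≤ cmax) (hcmax0 : 0 ≤ cmax) (hcmax1 : cmax < 1)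
    (hs : 0 < s) (hK : 0 ≤ K)
    (hHolder : ∀ i x y, |Df i x - Df i y| ≤ K * dist x y ^ s)
    (hm : 0 < m) (hmle : ∀ i x, m ≤ Df i x) :
    (∀ (w : List (Fin N)) (x y : X),
        Dfw f Df w x ≤ Dfw f Df w y *
          Real.exp (K * Metric.diam (Set.univ : Set X) ^ s / (m * (1 - cmax ^ s)))) ∧
    ∃ C₁ : ℝ, 1 < C₁ ∧ ∀ w : List (Fin N),
        (⨆ x, Dfw f Df w x) ≤ C₁ * (⨅ x, Dfw f Df w x) := by
  set D := Metric.diam (Set.univ : Set X)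
  set q := cmax ^ s
  have hq1 : q < 1 := Real.rpow_lt_one hcmax0 hcmax1 hs
  have hpos : ∀ w x, 0 < Dfw f Df w x := Dfw_pos f Df fun i x => hm.trans_le (hmle i x)
  have hvar : ∀ i (w : List (Fin N)) x y,
      |Df i (fw f w x) - Df i (fw f w y)| ≤ K * D ^ s * q ^ w.length := fun i w x y =>
    (abs_sub_Df_fw_le f Df hcontr hccmax hcmax0 hs.le hK hHolder i w x y).trans <| by
      gcongr; exact Metric.dist_le_diam_of_mem isCompact_univ.isBounded trivial trivial
  have hdistortion :
      ∀ w x y, Dfw f Df w x ≤ Dfw f Df w y * Real.exp (K * D ^ s / (m * (1 - q))) := by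
    intro w x y
    refine (Dfw_le_mul_exp_geom_sum f Df hm hmle hvar w x y).trans ?_
    gcongr
    · exact (hpos w y).le
    calc K * D ^ s / m * ∑ k ∈ range w.length, q ^ k ≤ K * D ^ s / m * (1 - q)⁻¹ := by
          gcongr; exact Real.geom_sum_le_inv_one_sub (Real.rpow_nonneg hcmax0 s) hq1 _
      _ = K * D ^ s / (m * (1 - q)) := by field_simp
  have hE : 1 ≤ Real.exp (K * D ^ s / (m * (1 - q))) :=
    Real.one_le_exp (by have := sub_pos.2 hq1; positivity)
  refine ⟨hdistortion, _, lt_add_of_le_of_pos hE one_pos, fun w => ?_⟩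
  refine Real.iSup_le_mul_iInf_of_le_mul (by positivity) (fun x => (hpos w x).le) fun x y => ?_
  exact (hdistortion w x y).trans <| by
    gcongr; exacts [(hpos w y).le, le_add_of_nonneg_right zero_le_one]

/-- Bounded distortion: `(Df_w)(x) ≤ (Df_w)(y)·exp(K·diam(X)^s/(m₊(1−c_max^s)))` for all
words `w` and all `x, y`; in particular there is `C₁ > 1`, independent of `w`, with
`T_w ≤ C₁ R_w`. -/
theorem bounded_distortion {X : Type*} [MetricSpace X] [CompactSpace X] [Nonempty X]
    {N : ℕ} (f : Fin N → X → X) (Df : Fin N → X → ℝ) (c : Fin N → ℝ)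
    (cmax s K m : ℝ)
    (hsim : ∀ i x, IsInfSimAt (f i) x (Df i x))
    (hcontr : ∀ i x y, dist (f i x) (f i y) ≤ c i * dist x y)
    (hccmax : ∀ i, c i ≤ cmax) (hcmax0 : 0 ≤ cmax) (hcmax1 : cmax < 1)
    (hs : 0 < s) (hK : 0 ≤ K)
    (hHolder : ∀ i x y, |Df i x - Df i y| ≤ K * dist x y ^ s)
    (hm : 0 < m) (hmle : ∀ i x, m ≤ Df i x) (hDlt : ∀ i x, Df i x < 1) :
    (∀ (w : List (Fin N)) (x y : X),
        Dfw f Df w x ≤ Dfw f Df w y *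
          Real.exp (K * Metric.diam (Set.univ : Set X) ^ s / (m * (1 - cmax ^ s)))) ∧
    ∃ C₁ : ℝ, 1 < C₁ ∧ ∀ w : List (Fin N),
        (⨆ x, Dfw f Df w x) ≤ C₁ * (⨅ x, Dfw f Df w x) :=
  bounded_distortion_general f Df c cmax s K m hcontr hccmax hcmax0 hcmax1 hs hK hHolder hm hmle
end

section
/- (Antichain lower bound at the critical exponent) For every 0 < r < ∞ and every finite maximal antichain Λ, Σ_{w∈Λ} (p_w R_w^r)^{σ_r/(r+σ_r)} ≥ M^{-6rσ_r/(r+σ_r)}, where M = C₂². -/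
open Filter Topology

/-- `Λ` is a finite maximal antichain of finite words over `Fin N`. -/
def IsFiniteMaximalAntichain {N : ℕ} (Λ : Finset (List (Fin N))) : Prop :=
  (∀ w ∈ Λ, w ≠ []) ∧
  (∀ σ : ℕ → Fin N, ∃ w ∈ Λ, ∃ k : ℕ, w = List.ofFn (fun i : Fin k => σ i)) ∧
  (∀ w ∈ Λ, ∀ w' ∈ Λ, w <+: w' → w = w')

/-- The product probability `p_w` of a word. -/
def pword {N : ℕ} (p : Fin N → ℝ) (w : List (Fin N)) : ℝ := (w.map p).prod

private lemma rpow_helper_ub {M x y a θ : ℝ} (hM : 0 < M) (hx : 0 ≤ x) (hy : 0 ≤ y)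
    (hθ : 0 ≤ θ) (h : x ≤ M ^ a * y) : x ^ θ ≤ M ^ (a * θ) * y ^ θ := by
  calc x ^ θ ≤ (M ^ a * y) ^ θ := Real.rpow_le_rpow hx h hθ
    _ = (M ^ a) ^ θ * y ^ θ := Real.mul_rpow (by positivity) hy
    _ = M ^ (a * θ) * y ^ θ := by rw [← Real.rpow_mul hM.le]

private lemma rpow_helper_lb {M x y a θ : ℝ} (hM : 0 < M) (hy : 0 ≤ y)
    (hθ : 0 ≤ θ) (h : M ^ a * y ≤ x) : M ^ (a * θ) * y ^ θ ≤ x ^ θ := by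
  calc M ^ (a * θ) * y ^ θ = (M ^ a) ^ θ * y ^ θ := by rw [← Real.rpow_mul hM.le]
    _ = (M ^ a * y) ^ θ := (Real.mul_rpow (by positivity) hy).symm
    _ ≤ x ^ θ := Real.rpow_le_rpow (by positivity) h hθ

/-- Antichain lower bound at the critical exponent: for every finite maximal antichain
`Λ`, `Σ_{w∈Λ} (p_w R_w^r)^{σ_r/(r+σ_r)} ≥ M^{-6rσ_r/(r+σ_r)}`, where `M = C₂²`. -/
theorem antichain_lower_bound {N : ℕ} (p : Fin N → ℝ)
    (T R : List (Fin N) → ℝ) (r σr C₁ C₂ : ℝ)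
    (hr : 0 < r) (hσ : 0 < σr) (hC₁ : 1 < C₁) (hC₁₂ : C₁ ≤ C₂)
    (hp : ∀ i, 0 < p i) (hpsum : ∑ i, p i = 1)
    (hRpos : ∀ w, 0 < R w) (hRT : ∀ w, R w ≤ T w)
    (hTR : ∀ w, T w ≤ C₁ * R w)
    (hTlt : ∀ w : List (Fin N), w ≠ [] → T w < 1)
    (hquasi : ∀ w τ : List (Fin N),
      (C₂ ^ 2 : ℝ)⁻¹ * T w * T τ ≤ T (w ++ τ) ∧ T (w ++ τ) ≤ (C₂ ^ 2 : ℝ) * T w * T τ)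
    (hbound : ∀ n : ℕ,
      (C₂ ^ 2 : ℝ) ^ (-(r * σr / (r + σr))) ≤
        ∑ w : Fin n → Fin N,
          (pword p (List.ofFn w) * R (List.ofFn w) ^ r) ^ (σr / (r + σr))) :
    ∀ Λ : Finset (List (Fin N)), IsFiniteMaximalAntichain Λ →
      (C₂ ^ 2 : ℝ) ^ (-(6 * r * σr / (r + σr))) ≤
        ∑ w ∈ Λ, (pword p w * R w ^ r) ^ (σr / (r + σr)) := by
  classical
  intro Λ hΛ
  obtain ⟨hne, hmax, hanti⟩ := hΛ
  -- `N` is positive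
  have hN : 0 < N := by
    rcases Nat.eq_zero_or_pos N with h | h
    · subst h; simp at hpsum
    · exact h
  set θ : ℝ := σr / (r + σr) with hθdef
  have hrσ : 0 < r + σr := by linarith
  have hθ : 0 < θ := div_pos hσ hrσ
  set M : ℝ := C₂ ^ 2 with hMdef
  have hC₂ : 1 < C₂ := lt_of_lt_of_le hC₁ hC₁₂
  have hM1 : 1 < M := by rw [hMdef]; nlinarith
  have hM0 : 0 < M := by linarith
  have hC₁M : C₁ ≤ M := by rw [hMdef]; nlinarith
  have hTpos : ∀ w, 0 < T w := fun w => lt_of_lt_of_le (hRpos w) (hRT w)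
  -- positivity of `pword`
  have hpw : ∀ w : List (Fin N), 0 < pword p w := by
    intro w
    unfold pword
    induction w with
    | nil => simp
    | cons a l ih => simpa [List.map_cons, List.prod_cons] using mul_pos (hp a) ih
  -- the basic quantity and its positivity
  have hterm_pos : ∀ w : List (Fin N), 0 < (pword p w * R w ^ r) ^ θ := fun w =>
    Real.rpow_pos_of_pos (mul_pos (hpw w) (Real.rpow_pos_of_pos (hRpos w) r)) θ
  have hbase_pos : ∀ w : List (Fin N), 0 < pword p w * R w ^ r := fun w =>
    mul_pos (hpw w) (Real.rpow_pos_of_pos (hRpos w) r)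
  -- splitting of pword
  have hpapp : ∀ w τ : List (Fin N), pword p (w ++ τ) = pword p w * pword p τ := by
    intro w τ; simp [pword]
  -- bounds on `R (w ++ τ)`
  have hRub : ∀ w τ : List (Fin N), R (w ++ τ) ≤ M * M * M * (R w * R τ) := by
    intro w τ
    calc R (w ++ τ) ≤ T (w ++ τ) := hRT _
      _ ≤ M * T w * T τ := (hquasi w τ).2
      _ ≤ M * (C₁ * R w) * (C₁ * R τ) := by
          have e1 : M * T w ≤ M * (C₁ * R w) := mul_le_mul_of_nonneg_left (hTR w) hM0.le
          have e2 : M * T w * T τ ≤ M * (C₁ * R w) * T τ :=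
            mul_le_mul_of_nonneg_right e1 (hTpos τ).le
          have e3 : M * (C₁ * R w) * T τ ≤ M * (C₁ * R w) * (C₁ * R τ) := by
            refine mul_le_mul_of_nonneg_left (hTR τ) ?_
            have := (hRpos w).le
            positivity
          linarith
      _ = C₁ * C₁ * M * (R w * R τ) := by ring
      _ ≤ M * M * M * (R w * R τ) := by
          have h1 : 0 ≤ R w * R τ := (mul_pos (hRpos w) (hRpos τ)).le
          have h0 : C₁ * C₁ ≤ M * M := mul_le_mul hC₁M hC₁M (by linarith) hM0.le
          have h2 : C₁ * C₁ * M ≤ M * M * M := by nlinarith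
          exact mul_le_mul_of_nonneg_right h2 h1
  have hRlb : ∀ w τ : List (Fin N), R w * R τ ≤ M * M * R (w ++ τ) := by
    intro w τ
    have h1 : M⁻¹ * T w * T τ ≤ T (w ++ τ) := (hquasi w τ).1
    have h2 : T w * T τ ≤ M * T (w ++ τ) := by
      have h := mul_le_mul_of_nonneg_left h1 hM0.le
      have hMM : M * M⁻¹ = 1 := mul_inv_cancel₀ (ne_of_gt hM0)
      rw [show M * (M⁻¹ * T w * T τ) = M * M⁻¹ * (T w * T τ) by ring, hMM, one_mul] at h
      exact h
    calc R w * R τ ≤ T w * T τ := by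
          have := hRpos w; have := hRpos τ
          exact mul_le_mul (hRT w) (hRT τ) (by linarith) (hTpos w).le
      _ ≤ M * T (w ++ τ) := h2
      _ ≤ M * (C₁ * R (w ++ τ)) := by
          have := hTR (w ++ τ)
          exact mul_le_mul_of_nonneg_left this hM0.le
      _ ≤ M * M * R (w ++ τ) := by
          have h4 : C₁ * R (w ++ τ) ≤ M * R (w ++ τ) :=
            mul_le_mul_of_nonneg_right hC₁M (hRpos (w ++ τ)).le
          have h5 := mul_le_mul_of_nonneg_left h4 hM0.le
          linarith [h5, (mul_assoc M M (R (w ++ τ))).symm ▸ h5]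
  -- base-level bounds on the product
  have hbase_ub : ∀ w τ : List (Fin N),
      pword p (w ++ τ) * R (w ++ τ) ^ r ≤
        M ^ (3 * r) * ((pword p w * R w ^ r) * (pword p τ * R τ ^ r)) := by
    intro w τ
    have hR3 : R (w ++ τ) ^ r ≤ M ^ (3 * r) * (R w * R τ) ^ r := by
      have h3 : M * M * M = M ^ (3 : ℝ) := by
        rw [show (3 : ℝ) = ((3 : ℕ) : ℝ) by norm_num, Real.rpow_natCast]; ring
      have := rpow_helper_ub (a := (3:ℝ)) (θ := r) hM0 (hRpos (w ++ τ)).le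
        (mul_pos (hRpos w) (hRpos τ)).le hr.le (by rw [← h3]; exact hRub w τ)
      calc R (w ++ τ) ^ r ≤ M ^ ((3:ℝ) * r) * (R w * R τ) ^ r := this
        _ = M ^ (3 * r) * (R w * R τ) ^ r := by norm_num
    have hsplit : (R w * R τ) ^ r = R w ^ r * R τ ^ r :=
      Real.mul_rpow (hRpos w).le (hRpos τ).le
    rw [hpapp]
    calc pword p w * pword p τ * R (w ++ τ) ^ r
        ≤ pword p w * pword p τ * (M ^ (3 * r) * (R w ^ r * R τ ^ r)) := by
          rw [← hsplit]
          exact mul_le_mul_of_nonneg_left hR3 (mul_pos (hpw w) (hpw τ)).le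
      _ = M ^ (3 * r) * ((pword p w * R w ^ r) * (pword p τ * R τ ^ r)) := by ring
  have hbase_lb : ∀ w τ : List (Fin N),
      M ^ (-(2 * r)) * ((pword p w * R w ^ r) * (pword p τ * R τ ^ r)) ≤
        pword p (w ++ τ) * R (w ++ τ) ^ r := by
    intro w τ
    have hR2 : M ^ (-(2 : ℝ) * r) * (R w * R τ) ^ r ≤ R (w ++ τ) ^ r := by
      apply rpow_helper_lb hM0 (mul_pos (hRpos w) (hRpos τ)).le hr.le
      have h2 : M ^ (-(2:ℝ)) = (M * M)⁻¹ := by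
        rw [show (-(2:ℝ)) = -((2 : ℕ) : ℝ) by norm_num, Real.rpow_neg hM0.le,
          Real.rpow_natCast]
        congr 1; ring
      rw [h2, inv_mul_le_iff₀ (by nlinarith)]
      calc R w * R τ ≤ M * M * R (w ++ τ) := hRlb w τ
        _ = M * M * R (w ++ τ) := rfl
    have hsplit : (R w * R τ) ^ r = R w ^ r * R τ ^ r :=
      Real.mul_rpow (hRpos w).le (hRpos τ).le
    rw [hpapp]
    have : M ^ (-(2 : ℝ) * r) * (R w ^ r * R τ ^ r) ≤ R (w ++ τ) ^ r := by
      rw [← hsplit]; exact hR2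
    calc M ^ (-(2 * r)) * ((pword p w * R w ^ r) * (pword p τ * R τ ^ r))
        = pword p w * pword p τ * (M ^ (-(2:ℝ) * r) * (R w ^ r * R τ ^ r)) := by
          ring_nf
      _ ≤ pword p w * pword p τ * R (w ++ τ) ^ r :=
          mul_le_mul_of_nonneg_left this (mul_pos (hpw w) (hpw τ)).le
  -- θ-level bounds
  have hterm_ub : ∀ w τ : List (Fin N),
      (pword p (w ++ τ) * R (w ++ τ) ^ r) ^ θ ≤
        M ^ (3 * r * θ) * ((pword p w * R w ^ r) ^ θ * (pword p τ * R τ ^ r) ^ θ) := by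
    intro w τ
    have := rpow_helper_ub (a := 3 * r) (θ := θ) hM0 (hbase_pos (w ++ τ)).le
      (mul_pos (hbase_pos w) (hbase_pos τ)).le hθ.le (hbase_ub w τ)
    calc (pword p (w ++ τ) * R (w ++ τ) ^ r) ^ θ
        ≤ M ^ (3 * r * θ) * ((pword p w * R w ^ r) * (pword p τ * R τ ^ r)) ^ θ := this
      _ = M ^ (3 * r * θ) * ((pword p w * R w ^ r) ^ θ * (pword p τ * R τ ^ r) ^ θ) := by
          rw [Real.mul_rpow (hbase_pos w).le (hbase_pos τ).le]
  have hterm_lb : ∀ w τ : List (Fin N),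
      M ^ (-(2 * r) * θ) * ((pword p w * R w ^ r) ^ θ * (pword p τ * R τ ^ r) ^ θ) ≤
        (pword p (w ++ τ) * R (w ++ τ) ^ r) ^ θ := by
    intro w τ
    have := rpow_helper_lb (a := -(2 * r)) (θ := θ) hM0
      (mul_pos (hbase_pos w) (hbase_pos τ)).le hθ.le (hbase_lb w τ)
    calc M ^ (-(2 * r) * θ) * ((pword p w * R w ^ r) ^ θ * (pword p τ * R τ ^ r) ^ θ)
        = M ^ (-(2 * r) * θ) * ((pword p w * R w ^ r) * (pword p τ * R τ ^ r)) ^ θ := by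
          rw [Real.mul_rpow (hbase_pos w).le (hbase_pos τ).le]
      _ ≤ (pword p (w ++ τ) * R (w ++ τ) ^ r) ^ θ := this
  -- the function-indexed sums
  set S : ℕ → ℝ := fun n => ∑ f : Fin n → Fin N,
    (pword p (List.ofFn f) * R (List.ofFn f) ^ r) ^ θ with hSdef
  have hSlb : ∀ n, M ^ (-(r * θ)) ≤ S n := by
    intro n
    have h := hbound n
    have : -(r * σr / (r + σr)) = -(r * θ) := by rw [hθdef]; ring
    rw [this] at h
    exact h
  have hSpos : ∀ n, 0 < S n := fun n =>
    lt_of_lt_of_le (Real.rpow_pos_of_pos hM0 _) (hSlb n)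
  -- supermultiplicativity
  have hSmul : ∀ a b : ℕ, M ^ (-(2 * r) * θ) * (S a * S b) ≤ S (a + b) := by
    intro a b
    have hreindex : S (a + b) = ∑ fg : (Fin a → Fin N) × (Fin b → Fin N),
        (pword p (List.ofFn fg.1 ++ List.ofFn fg.2) *
          R (List.ofFn fg.1 ++ List.ofFn fg.2) ^ r) ^ θ := by
      simp only [hSdef]
      exact (Fintype.sum_equiv (Fin.appendEquiv a b)
        (fun fg => (pword p (List.ofFn fg.1 ++ List.ofFn fg.2) *
          R (List.ofFn fg.1 ++ List.ofFn fg.2) ^ r) ^ θ)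
        (fun f => (pword p (List.ofFn f) * R (List.ofFn f) ^ r) ^ θ)
        (fun fg => by
          show (pword p (List.ofFn fg.1 ++ List.ofFn fg.2) *
              R (List.ofFn fg.1 ++ List.ofFn fg.2) ^ r) ^ θ =
            (pword p (List.ofFn (Fin.append fg.1 fg.2)) *
              R (List.ofFn (Fin.append fg.1 fg.2)) ^ r) ^ θ
          rw [List.ofFn_fin_append])).symm
    rw [hreindex]
    have hexp : S a * S b = ∑ fg : (Fin a → Fin N) × (Fin b → Fin N),
        (pword p (List.ofFn fg.1) * R (List.ofFn fg.1) ^ r) ^ θ *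
          (pword p (List.ofFn fg.2) * R (List.ofFn fg.2) ^ r) ^ θ := by
      simp only [hSdef]
      rw [Finset.sum_mul_sum, Fintype.sum_prod_type]
    rw [hexp, Finset.mul_sum]
    exact Finset.sum_le_sum fun fg _ => hterm_lb _ _
  -- the decomposition along the antichain
  set n := Λ.sup List.length with hn
  have key : ∀ f : Fin n → Fin N, ∃ w, w ∈ Λ ∧
      ∃ g : Fin (n - w.length) → Fin N, List.ofFn f = w ++ List.ofFn g := by
    intro f
    obtain ⟨w, hw, k, hk⟩ := hmax (fun i => if h : i < n then f ⟨i, h⟩ else ⟨0, hN⟩)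
    subst hk
    have hkn : (List.ofFn fun i : Fin k =>
        if h : (i : ℕ) < n then f ⟨i, h⟩ else ⟨0, hN⟩).length ≤ n :=
      Finset.le_sup (f := List.length) hw
    rw [List.length_ofFn] at hkn
    refine ⟨_, hw, fun i => f ⟨k + i, by have := i.2; simp at this ⊢; omega⟩, ?_⟩
    apply List.ext_getElem
    · simp; omega
    · intro i h1 h2
      simp only [List.getElem_ofFn]
      by_cases hi : i < k
      · rw [List.getElem_append_left (by simpa using hi), List.getElem_ofFn]
        have : (i : ℕ) < n := by omega
        simp only [this, dif_pos]
      · rw [List.getElem_append_right (by simpa using hi), List.getElem_ofFn]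
        congr 1
        apply Fin.ext
        simp
        omega
  choose W hWΛ G hG using key
  set e : (Fin n → Fin N) → Σ w : List (Fin N), (Fin (n - w.length) → Fin N) :=
    fun f => ⟨W f, G f⟩ with he
  have he_inj : ∀ f f', e f = e f' → f = f' := by
    intro f f' h
    apply List.ofFn_injective
    rw [hG f, hG f']
    exact congrArg
      (fun x : Σ w : List (Fin N), (Fin (n - w.length) → Fin N) =>
        x.1 ++ List.ofFn x.2) h
  -- S n is at most the sigma sum over Λ
  have hstep1 : S n ≤ ∑ x ∈ Λ.sigma (fun w =>
      (Finset.univ : Finset (Fin (n - w.length) → Fin N))),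
      (pword p (x.1 ++ List.ofFn x.2) * R (x.1 ++ List.ofFn x.2) ^ r) ^ θ := by
    have h1 : S n = ∑ x ∈ Finset.univ.image e,
        (pword p (x.1 ++ List.ofFn x.2) * R (x.1 ++ List.ofFn x.2) ^ r) ^ θ := by
      rw [Finset.sum_image (fun f _ f' _ h => he_inj f f' h), hSdef]
      exact Finset.sum_congr rfl fun f _ => by rw [hG f]
    rw [h1]
    apply Finset.sum_le_sum_of_subset_of_nonneg
    · intro x hx
      obtain ⟨f, _, rfl⟩ := Finset.mem_image.mp hx
      exact Finset.mem_sigma.mpr ⟨hWΛ f, Finset.mem_univ _⟩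
    · intro x _ _
      exact (hterm_pos _).le
  rw [Finset.sum_sigma] at hstep1
  -- bound each inner sum
  have hstep2 : ∀ w ∈ Λ,
      (∑ g : Fin (n - w.length) → Fin N,
        (pword p (w ++ List.ofFn g) * R (w ++ List.ofFn g) ^ r) ^ θ) ≤
      M ^ (3 * r * θ) * ((pword p w * R w ^ r) ^ θ * S (n - w.length)) := by
    intro w _
    calc (∑ g : Fin (n - w.length) → Fin N,
          (pword p (w ++ List.ofFn g) * R (w ++ List.ofFn g) ^ r) ^ θ)
        ≤ ∑ g : Fin (n - w.length) → Fin N,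
            M ^ (3 * r * θ) * ((pword p w * R w ^ r) ^ θ *
              (pword p (List.ofFn g) * R (List.ofFn g) ^ r) ^ θ) :=
          Finset.sum_le_sum fun g _ => hterm_ub w (List.ofFn g)
      _ = M ^ (3 * r * θ) * ((pword p w * R w ^ r) ^ θ * S (n - w.length)) := by
          rw [hSdef, Finset.mul_sum, Finset.mul_sum]
  -- bound S (n - w.length) by S n
  have hSle : ∀ m : ℕ, m ≤ n → S m ≤ M ^ (3 * (r * θ)) * S n := by
    intro m hm
    have h1 : M ^ (-(2 * r) * θ) * (S m * S (n - m)) ≤ S n := by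
      have := hSmul m (n - m)
      rwa [Nat.add_sub_cancel' hm] at this
    have h2 : M ^ (-(2 * r) * θ) * (S m * M ^ (-(r * θ))) ≤ S n := by
      refine le_trans ?_ h1
      refine mul_le_mul_of_nonneg_left ?_ (Real.rpow_pos_of_pos hM0 _).le
      exact mul_le_mul_of_nonneg_left (hSlb (n - m)) (hSpos m).le
    have hcomb : M ^ (-(2 * r) * θ) * M ^ (-(r * θ)) = M ^ (-(3 * (r * θ))) := by
      rw [← Real.rpow_add hM0]; congr 1; ring
    have h3 : M ^ (-(3 * (r * θ))) * S m ≤ S n := by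
      calc M ^ (-(3 * (r * θ))) * S m
          = M ^ (-(2 * r) * θ) * (S m * M ^ (-(r * θ))) := by rw [← hcomb]; ring
        _ ≤ S n := h2
    have hzero : 3 * (r * θ) + -(3 * (r * θ)) = 0 := by ring
    calc S m = M ^ (3 * (r * θ)) * (M ^ (-(3 * (r * θ))) * S m) := by
          rw [← mul_assoc, ← Real.rpow_add hM0, hzero, Real.rpow_zero, one_mul]
      _ ≤ M ^ (3 * (r * θ)) * S n :=
          mul_le_mul_of_nonneg_left h3 (Real.rpow_pos_of_pos hM0 _).le
  -- put it together
  have hfinal : S n ≤ M ^ (6 * (r * θ)) * S n *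
      ∑ w ∈ Λ, (pword p w * R w ^ r) ^ θ := by
    calc S n ≤ ∑ w ∈ Λ, ∑ g : Fin (n - w.length) → Fin N,
          (pword p (w ++ List.ofFn g) * R (w ++ List.ofFn g) ^ r) ^ θ := hstep1
      _ ≤ ∑ w ∈ Λ, M ^ (3 * r * θ) * ((pword p w * R w ^ r) ^ θ * S (n - w.length)) :=
          Finset.sum_le_sum hstep2
      _ ≤ ∑ w ∈ Λ, M ^ (3 * r * θ) *
            ((pword p w * R w ^ r) ^ θ * (M ^ (3 * (r * θ)) * S n)) := by
          refine Finset.sum_le_sum fun w hw => ?_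
          have hle : S (n - w.length) ≤ M ^ (3 * (r * θ)) * S n :=
            hSle _ (Nat.sub_le n w.length)
          exact mul_le_mul_of_nonneg_left
            (mul_le_mul_of_nonneg_left hle (hterm_pos w).le)
            (Real.rpow_pos_of_pos hM0 _).le
      _ = ∑ w ∈ Λ, M ^ (6 * (r * θ)) * S n * (pword p w * R w ^ r) ^ θ := by
          refine Finset.sum_congr rfl fun w _ => ?_
          have hMM6 : M ^ (3 * r * θ) * M ^ (3 * (r * θ)) = M ^ (6 * (r * θ)) := by
            rw [← Real.rpow_add hM0]; congr 1; ring
          calc M ^ (3 * r * θ) *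
                ((pword p w * R w ^ r) ^ θ * (M ^ (3 * (r * θ)) * S n))
              = M ^ (3 * r * θ) * M ^ (3 * (r * θ)) * S n *
                  (pword p w * R w ^ r) ^ θ := by ring
            _ = M ^ (6 * (r * θ)) * S n * (pword p w * R w ^ r) ^ θ := by rw [hMM6]
      _ = M ^ (6 * (r * θ)) * S n * ∑ w ∈ Λ, (pword p w * R w ^ r) ^ θ :=
          (Finset.mul_sum _ _ _).symm
  have hdiv : 1 ≤ M ^ (6 * (r * θ)) * ∑ w ∈ Λ, (pword p w * R w ^ r) ^ θ := by
    have hSn := hSpos n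
    nlinarith [hfinal, hSn]
  have hgoal : M ^ (-(6 * (r * θ))) ≤ ∑ w ∈ Λ, (pword p w * R w ^ r) ^ θ := by
    have hK : (0:ℝ) < M ^ (-(6 * (r * θ))) := Real.rpow_pos_of_pos hM0 _
    have hzero : -(6 * (r * θ)) + 6 * (r * θ) = 0 := by ring
    have hKK : M ^ (-(6 * (r * θ))) * M ^ (6 * (r * θ)) = 1 := by
      rw [← Real.rpow_add hM0, hzero, Real.rpow_zero]
    calc M ^ (-(6 * (r * θ))) = M ^ (-(6 * (r * θ))) * 1 := (mul_one _).symm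
      _ ≤ M ^ (-(6 * (r * θ))) *
            (M ^ (6 * (r * θ)) * ∑ w ∈ Λ, (pword p w * R w ^ r) ^ θ) :=
          mul_le_mul_of_nonneg_left hdiv hK.le
      _ = M ^ (-(6 * (r * θ))) * M ^ (6 * (r * θ)) *
            ∑ w ∈ Λ, (pword p w * R w ^ r) ^ θ := by ring
      _ = ∑ w ∈ Λ, (pword p w * R w ^ r) ^ θ := by rw [hKK, one_mul]
  have : -(6 * r * σr / (r + σr)) = -(6 * (r * θ)) := by rw [hθdef]; ring
  rw [this]
  exact hgoal
end

section
/- (Continuity of invariant measures) Let (X, d) be a compact metric space. For each n, let μₙ be the invariant measure of the contractive IFS {f_{n,1},…,f_{n,N}} with probability vector (p_{n,1},…,p_{n,N}), and let μ be the invariant measure of {f₁,…,f_N} with probability vector (p₁,…,p_N). If f_{n,j} → f_j uniformly on X and p_{n,j} → p_j for all 1 ≤ j ≤ N, then μₙ → μ in the Hutchinson (dual-Lipschitz/Wasserstein-1) metric d_H(μ, ν) = sup{ |∫ g dμ − ∫ g dν| : Lip(g) ≤ 1 }, equivalently μₙ → μ weakly. -/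
open Filter Topology MeasureTheory

/-- The Hutchinson (dual-Lipschitz / Wasserstein-1) distance between two measures. -/
noncomputable def dHutch {X : Type*} [MetricSpace X] [MeasurableSpace X]
    (μ ν : Measure X) : ℝ :=
  sSup { d : ℝ | ∃ g : X → ℝ, LipschitzWith 1 g ∧ d = |∫ x, g x ∂μ - ∫ x, g x ∂ν| }

/-!
Write `D` for the diameter of `X` and `K < 1` for a common contraction constant of the `fⱼ`.
For a `1`-Lipschitz `g`, the invariance equations express `∫ g dμₙ - ∫ g dμ` as
`∑ⱼ (pₙⱼ - pⱼ) (∫ g∘fₙⱼ dμₙ - g x₀) + ∑ⱼ pⱼ ∫ (g∘fₙⱼ - g∘fⱼ) dμₙ + ∑ⱼ pⱼ (∫ g∘fⱼ dμₙ - ∫ g∘fⱼ dμ)`,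
the constant `g x₀` being free because both weight vectors sum to `1`. The three sums are bounded
by `D ∑ⱼ |pₙⱼ - pⱼ|`, by `supⱼ ‖fₙⱼ - fⱼ‖∞`, and by `K d_H(μₙ, μ)` since `g∘fⱼ` is `K`-Lipschitz.
Hence `(1 - K) d_H(μₙ, μ) → 0`. Convergence in `d_H` gives convergence of the integrals of all
Lipschitz functions, which characterises weak convergence of probability measures.
-/

open scoped NNReal

theorem lipschitzWith_toNNReal_of_dist_le_mul {α β : Type*} [PseudoMetricSpace α]
    [PseudoMetricSpace β] {F : α → β} {c : ℝ} (h : ∀ x y, dist (F x) (F y) ≤ c * dist x y) :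
    LipschitzWith c.toNNReal F :=
  LipschitzWith.of_dist_le_mul fun x y =>
    (h x y).trans (mul_le_mul_of_nonneg_right (Real.le_coe_toNNReal c) dist_nonneg)

theorem exists_lipschitzWith_lt_one {ι α β : Type*} [Fintype ι] [PseudoMetricSpace α]
    [PseudoMetricSpace β] {F : ι → α → β}
    (h : ∀ j, ∃ c : ℝ, c < 1 ∧ ∀ x y, dist (F j x) (F j y) ≤ c * dist x y) :
    ∃ K : ℝ≥0, K < 1 ∧ ∀ j, LipschitzWith K (F j) := by
  choose c hc1 hc using h
  exact ⟨Finset.univ.sup fun j => (c j).toNNReal,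
    (Finset.sup_lt_iff one_pos).2 fun j _ => Real.toNNReal_lt_one.2 (hc1 j),
    fun j => (lipschitzWith_toNNReal_of_dist_le_mul (hc j)).weaken
      (Finset.le_sup (f := fun j => (c j).toNNReal) (Finset.mem_univ j))⟩

theorem abs_sum_mul_le_sum_abs_mul {ι : Type*} [Fintype ι] (w a : ι → ℝ) {b : ℝ}
    (h : ∀ j, |a j| ≤ b) : |∑ j, w j * a j| ≤ (∑ j, |w j|) * b := by
  rw [Finset.sum_mul]
  refine (Finset.abs_sum_le_sum_abs _ _).trans (Finset.sum_le_sum fun j _ => ?_)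
  rw [abs_mul]
  exact mul_le_mul_of_nonneg_left (h j) (abs_nonneg _)

theorem tendsto_zero_of_eventually_le_mul_add {γ : Type*} {l : Filter γ} {d : γ → ℝ} {K : ℝ}
    (hK : K < 1) (hd : ∀ i, 0 ≤ d i) (h : ∀ ε > 0, ∀ᶠ i in l, d i ≤ K * d i + ε) :
    Tendsto d l (𝓝 0) := by
  refine tendsto_order.2 ⟨fun a ha => Eventually.of_forall fun i => ha.trans_le (hd i),
    fun a ha => ?_⟩
  filter_upwards [h ((1 - K) * a / 2) (by have := sub_pos.2 hK; positivity)] with i hi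
  nlinarith

theorem dHutch_le_of_forall {X : Type*} [MetricSpace X] [MeasurableSpace X]
    {μ ν : Measure X} {C : ℝ}
    (h : ∀ g : X → ℝ, LipschitzWith 1 g → |∫ x, g x ∂μ - ∫ x, g x ∂ν| ≤ C) : dHutch μ ν ≤ C :=
  csSup_le ⟨_, 0, LipschitzWith.const' 0, rfl⟩ fun _ ⟨g, hg, hd⟩ => hd ▸ h g hg

def IsHutchinsonInvariant {X ι : Type*} [MeasurableSpace X] [Fintype ι] (F : ι → X → X)
    (q : ι → ℝ) (ν : Measure X) : Prop :=
  ν = ∑ j, ENNReal.ofReal (q j) • ν.map (F j)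

section Compact

variable {X : Type*} [MetricSpace X] [CompactSpace X]

theorem LipschitzWith.abs_sub_le_mul_diam {g : X → ℝ} {K : ℝ≥0} (hg : LipschitzWith K g)
    (x y : X) : |g x - g y| ≤ K * Metric.diam (Set.univ : Set X) := by
  rw [← Real.dist_eq]
  exact hg.dist_le_mul_of_le
    (Metric.dist_le_diam_of_mem isCompact_univ.isBounded (Set.mem_univ x) (Set.mem_univ y))

variable [MeasurableSpace X] [BorelSpace X]

theorem Continuous.integrable_of_compactSpace {g : X → ℝ} (hg : Continuous g) (ν : Measure X)
    [IsFiniteMeasure ν] : Integrable g ν :=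
  hg.integrable_of_hasCompactSupport (HasCompactSupport.of_compactSpace g)

theorem abs_integral_sub_le_of_forall_abs_sub_le {ν : Measure X} [IsProbabilityMeasure ν]
    {g : X → ℝ} (hg : Continuous g) {c C : ℝ} (hC : ∀ x, |g x - c| ≤ C) :
    |∫ x, g x ∂ν - c| ≤ C := by
  have hshift : ∫ x, (g x - c) ∂ν = ∫ x, g x ∂ν - c := by
    rw [integral_sub (hg.integrable_of_compactSpace ν) (integrable_const c)]
    simp
  have := norm_integral_le_of_norm_le_const (μ := ν)
    (Eventually.of_forall fun x => (Real.norm_eq_abs _).trans_le (hC x))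
  rwa [Real.norm_eq_abs, hshift, probReal_univ, mul_one] at this

theorem LipschitzWith.abs_integral_sub_integral_le_mul_diam (μ ν : Measure X)
    [IsProbabilityMeasure μ] [IsProbabilityMeasure ν] {g : X → ℝ} {K : ℝ≥0}
    (hg : LipschitzWith K g) :
    |∫ x, g x ∂μ - ∫ x, g x ∂ν| ≤ 2 * (K * Metric.diam (Set.univ : Set X)) := by
  obtain ⟨x₀⟩ := nonempty_of_isProbabilityMeasure μ
  have hμ := abs_integral_sub_le_of_forall_abs_sub_le (ν := μ) hg.continuous
    fun x => hg.abs_sub_le_mul_diam x x₀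
  have hν := abs_integral_sub_le_of_forall_abs_sub_le (ν := ν) hg.continuous
    fun x => hg.abs_sub_le_mul_diam x x₀
  calc |∫ x, g x ∂μ - ∫ x, g x ∂ν| = |(∫ x, g x ∂μ - g x₀) - (∫ x, g x ∂ν - g x₀)| := by ring_nf
    _ ≤ _ := (abs_sub _ _).trans (by linarith)

section

variable (μ ν : Measure X) [IsProbabilityMeasure μ] [IsProbabilityMeasure ν]

theorem bddAbove_dHutch_set :
    BddAbove { d : ℝ | ∃ g : X → ℝ, LipschitzWith 1 g ∧ d = |∫ x, g x ∂μ - ∫ x, g x ∂ν| } := by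
  refine ⟨2 * (1 * Metric.diam (Set.univ : Set X)), ?_⟩
  rintro d ⟨g, hg, rfl⟩
  exact_mod_cast hg.abs_integral_sub_integral_le_mul_diam μ ν

theorem LipschitzWith.abs_integral_sub_integral_le_dHutch {g : X → ℝ} (hg : LipschitzWith 1 g) :
    |∫ x, g x ∂μ - ∫ x, g x ∂ν| ≤ dHutch μ ν :=
  le_csSup (bddAbove_dHutch_set μ ν) ⟨g, hg, rfl⟩

theorem dHutch_nonneg : 0 ≤ dHutch μ ν := by
  simpa using (LipschitzWith.const' (β := ℝ) 0).abs_integral_sub_integral_le_dHutch μ ν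

theorem LipschitzWith.abs_integral_sub_integral_le_mul_dHutch {g : X → ℝ} {K : ℝ≥0}
    (hg : LipschitzWith K g) : |∫ x, g x ∂μ - ∫ x, g x ∂ν| ≤ K * dHutch μ ν := by
  rcases eq_or_ne K 0 with rfl | hK
  · simpa using hg.abs_integral_sub_integral_le_mul_diam μ ν
  have hscaled : LipschitzWith 1 fun x => (K : ℝ)⁻¹ * g x := by
    refine ((lipschitzWith_smul (K : ℝ)⁻¹).comp hg).weaken ?_
    simp [hK]
  have := hscaled.abs_integral_sub_integral_le_dHutch μ ν
  rw [integral_const_mul, integral_const_mul, ← mul_sub, abs_mul, abs_inv, NNReal.abs_eq,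
    inv_mul_le_iff₀ (by positivity)] at this
  exact this

end

theorem tendsto_integral_of_tendsto_dHutch {γ : Type*} {l : Filter γ} [l.IsCountablyGenerated]
    {μs : γ → Measure X} [∀ i, IsProbabilityMeasure (μs i)] {μ : Measure X}
    [IsProbabilityMeasure μ] (h : Tendsto (fun i => dHutch (μs i) μ) l (𝓝 0))
    {g : X → ℝ} (hg : Continuous g) :
    Tendsto (fun i => ∫ x, g x ∂(μs i)) l (𝓝 (∫ x, g x ∂μ)) := by
  let P : γ → ProbabilityMeasure X := fun i => ⟨μs i, inferInstance⟩
  have hP : Tendsto P l (𝓝 ⟨μ, inferInstance⟩) := by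
    refine tendsto_iff_forall_lipschitz_integral_tendsto.2 fun f _ ⟨L, hf⟩ => ?_
    rw [tendsto_iff_norm_sub_tendsto_zero]
    refine squeeze_zero (fun _ => norm_nonneg _)
      (fun i => hf.abs_integral_sub_integral_le_mul_dHutch (μs i) μ) ?_
    simpa using h.const_mul (L : ℝ)
  exact ProbabilityMeasure.tendsto_iff_forall_integral_tendsto.1 hP
    (BoundedContinuousFunction.mkOfCompact ⟨g, hg⟩)

theorem IsHutchinsonInvariant.integral_eq_sum {ι : Type*} [Fintype ι] {F : ι → X → X}
    {q : ι → ℝ} {ν : Measure X} [IsFiniteMeasure ν] (hν : IsHutchinsonInvariant F q ν)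
    (hq : ∀ j, 0 ≤ q j) (hF : ∀ j, Measurable (F j)) {g : X → ℝ} (hg : Continuous g) :
    ∫ x, g x ∂ν = ∑ j, q j * ∫ x, g (F j x) ∂ν := by
  conv_lhs => rw [hν]
  rw [integral_finsetSum_measure fun j _ =>
    (hg.integrable_of_compactSpace _).smul_measure ENNReal.ofReal_ne_top]
  refine Finset.sum_congr rfl fun j _ => ?_
  rw [integral_smul_measure, ENNReal.toReal_ofReal (hq j),
    integral_map (hF j).aemeasurable hg.aestronglyMeasurable, smul_eq_mul]

theorem IsHutchinsonInvariant.dHutch_le {ι : Type*} [Fintype ι] {F F' : ι → X → X}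
    {q q' : ι → ℝ} {ν ν' : Measure X} [IsProbabilityMeasure ν] [IsProbabilityMeasure ν']
    (hν : IsHutchinsonInvariant F q ν) (hν' : IsHutchinsonInvariant F' q' ν') {K : ℝ≥0}
    (hF : ∀ j, LipschitzWith K (F j)) (hF' : ∀ j, Continuous (F' j))
    (hq : ∀ j, 0 ≤ q j) (hq' : ∀ j, 0 ≤ q' j) (hqsum : ∑ j, q j = 1) (hq'sum : ∑ j, q' j = 1)
    {ε : ℝ} (hε : ∀ j x, dist (F j x) (F' j x) ≤ ε) :
    dHutch ν' ν ≤ K * dHutch ν' ν + Metric.diam (Set.univ : Set X) * ∑ j, |q' j - q j| + ε := by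
  obtain ⟨x₀⟩ := nonempty_of_isProbabilityMeasure ν
  refine dHutch_le_of_forall fun g hg => ?_
  set A := fun j => ∫ x, g (F' j x) ∂ν'
  set C := fun j => ∫ x, g (F j x) ∂ν'
  set B := fun j => ∫ x, g (F j x) ∂ν
  have hA : ∀ j, |A j - g x₀| ≤ Metric.diam (Set.univ : Set X) := fun j =>
    abs_integral_sub_le_of_forall_abs_sub_le (hg.continuous.comp (hF' j)) fun x => by
      simpa using hg.abs_sub_le_mul_diam (F' j x) x₀
  have hAC : ∀ j, |A j - C j| ≤ ε := fun j => by
    have hsub := integral_sub ((hg.continuous.comp' (hF' j)).integrable_of_compactSpace ν')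
      ((hg.continuous.comp' (hF j).continuous).integrable_of_compactSpace ν')
    have := abs_integral_sub_le_of_forall_abs_sub_le (c := 0) (ν := ν')
      (g := fun x => g (F' j x) - g (F j x))
      ((hg.continuous.comp' (hF' j)).sub (hg.continuous.comp' (hF j).continuous)) fun x => by
        simpa [Real.dist_eq] using
          (hg.dist_le_mul (F' j x) (F j x)).trans (by simpa [dist_comm] using hε j x)
    rwa [sub_zero, hsub] at this
  have hCB : ∀ j, |C j - B j| ≤ K * dHutch ν' ν := fun j => by
    simpa using (hg.comp (hF j)).abs_integral_sub_integral_le_mul_dHutch ν' ν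
  have hdecomp : ∫ x, g x ∂ν' - ∫ x, g x ∂ν = ∑ j, (q' j - q j) * (A j - g x₀)
      + ∑ j, q j * (A j - C j) + ∑ j, q j * (C j - B j) := by
    rw [hν'.integral_eq_sum hq' (fun j => (hF' j).measurable) hg.continuous,
      hν.integral_eq_sum hq (fun j => (hF j).continuous.measurable) hg.continuous]
    simp only [mul_sub, sub_mul, Finset.sum_sub_distrib, ← Finset.sum_mul, hqsum, hq'sum]
    ring
  have hqabs : ∑ j, |q j| = 1 := by simp only [abs_of_nonneg (hq _), hqsum]
  rw [hdecomp]
  calc _ ≤ |∑ j, (q' j - q j) * (A j - g x₀)| + |∑ j, q j * (A j - C j)|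
        + |∑ j, q j * (C j - B j)| := abs_add_three _ _ _
    _ ≤ (∑ j, |q' j - q j|) * Metric.diam (Set.univ : Set X) + (∑ j, |q j|) * ε
        + (∑ j, |q j|) * (K * dHutch ν' ν) := by
      gcongr <;> exact abs_sum_mul_le_sum_abs_mul _ _ ‹_›
    _ = _ := by rw [hqabs]; ring

end Compact

theorem invariant_measures_continuity_general {X : Type*} [MetricSpace X] [CompactSpace X]
    [MeasurableSpace X] [BorelSpace X]
    {N : ℕ}
    (fseq : ℕ → Fin N → X → X) (f : Fin N → X → X)
    (pseq : ℕ → Fin N → ℝ) (p : Fin N → ℝ)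
    (μseq : ℕ → Measure X) (μ : Measure X)
    [∀ n, IsProbabilityMeasure (μseq n)] [IsProbabilityMeasure μ]
    (hcontrseq : ∀ n j, ∃ c : ℝ, c < 1 ∧ ∀ x y, dist (fseq n j x) (fseq n j y) ≤ c * dist x y)
    (hcontr : ∀ j, ∃ c : ℝ, c < 1 ∧ ∀ x y, dist (f j x) (f j y) ≤ c * dist x y)
    (hpseq : ∀ n j, 0 ≤ pseq n j) (hpsumseq : ∀ n, ∑ j, pseq n j = 1)
    (hp : ∀ j, 0 ≤ p j) (hpsum : ∑ j, p j = 1)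
    (hinvseq : ∀ n, μseq n = ∑ j, ENNReal.ofReal (pseq n j) • ((μseq n).map (fseq n j)))
    (hinv : μ = ∑ j, ENNReal.ofReal (p j) • (μ.map (f j)))
    (hfconv : ∀ j, TendstoUniformly (fun n => fseq n j) (f j) atTop)
    (hpconv : ∀ j, Tendsto (fun n => pseq n j) atTop (𝓝 (p j))) :
    Tendsto (fun n => dHutch (μseq n) μ) atTop (𝓝 0) ∧
    ∀ g : X → ℝ, Continuous g →
      Tendsto (fun n => ∫ x, g x ∂(μseq n)) atTop (𝓝 (∫ x, g x ∂μ)) := by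
  obtain ⟨K, hK1, hfK⟩ := exists_lipschitzWith_lt_one hcontr
  have hfseq : ∀ n j, Continuous (fseq n j) := fun n j =>
    let ⟨_, _, hc⟩ := hcontrseq n j
    (lipschitzWith_toNNReal_of_dist_le_mul hc).continuous
  have hpdist : Tendsto (fun n => Metric.diam (Set.univ : Set X) * ∑ j, |pseq n j - p j|)
      atTop (𝓝 0) := by
    simpa using (tendsto_finsetSum Finset.univ fun j _ =>
      ((hpconv j).sub_const (p j)).abs).const_mul (Metric.diam (Set.univ : Set X))
  have hd : Tendsto (fun n => dHutch (μseq n) μ) atTop (𝓝 0) := by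
    refine tendsto_zero_of_eventually_le_mul_add (K := K) (by exact_mod_cast hK1)
      (fun n => dHutch_nonneg _ _) fun ε hε => ?_
    have hfε : ∀ᶠ n in atTop, ∀ j x, dist (f j x) (fseq n j x) < ε / 2 :=
      eventually_all.2 fun j => Metric.tendstoUniformly_iff.1 (hfconv j) _ (half_pos hε)
    filter_upwards [hpdist.eventually (gt_mem_nhds (half_pos hε)), hfε] with n hpn hfn
    have := IsHutchinsonInvariant.dHutch_le hinv (hinvseq n) hfK (hfseq n) hp (hpseq n) hpsum
      (hpsumseq n) fun j x => (hfn j x).le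
    linarith
  exact ⟨hd, fun g hg => tendsto_integral_of_tendsto_dHutch hd hg⟩

/-- Continuity of invariant measures: if the contractive IFSs `{f_{n,j}}` converge
uniformly to `{f_j}` and the probability vectors converge, then the invariant measures
`μₙ` converge to `μ` in the Hutchinson metric, equivalently weakly. -/
theorem invariant_measures_continuity {X : Type*} [MetricSpace X] [CompactSpace X]
    [Nonempty X] [MeasurableSpace X] [BorelSpace X]
    {N : ℕ}
    (fseq : ℕ → Fin N → X → X) (f : Fin N → X → X)
    (pseq : ℕ → Fin N → ℝ) (p : Fin N → ℝ)
    (μseq : ℕ → Measure X) (μ : Measure X)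
    [∀ n, IsProbabilityMeasure (μseq n)] [IsProbabilityMeasure μ]
    (hcontrseq : ∀ n j, ∃ c : ℝ, c < 1 ∧ ∀ x y, dist (fseq n j x) (fseq n j y) ≤ c * dist x y)
    (hcontr : ∀ j, ∃ c : ℝ, c < 1 ∧ ∀ x y, dist (f j x) (f j y) ≤ c * dist x y)
    (hpseq : ∀ n j, 0 ≤ pseq n j) (hpsumseq : ∀ n, ∑ j, pseq n j = 1)
    (hp : ∀ j, 0 ≤ p j) (hpsum : ∑ j, p j = 1)
    (hinvseq : ∀ n, μseq n = ∑ j, ENNReal.ofReal (pseq n j) • ((μseq n).map (fseq n j)))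
    (hinv : μ = ∑ j, ENNReal.ofReal (p j) • (μ.map (f j)))
    (hfconv : ∀ j, TendstoUniformly (fun n => fseq n j) (f j) atTop)
    (hpconv : ∀ j, Tendsto (fun n => pseq n j) atTop (𝓝 (p j))) :
    Tendsto (fun n => dHutch (μseq n) μ) atTop (𝓝 0) ∧
    ∀ g : X → ℝ, Continuous g →
      Tendsto (fun n => ∫ x, g x ∂(μseq n)) atTop (𝓝 (∫ x, g x ∂μ)) :=
  invariant_measures_continuity_general fseq f pseq p μseq μ hcontrseq hcontr hpseq hpsumseq hp
    hpsum hinvseq hinv hfconv hpconv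
end
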